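/- For every n ∈ ℕ, the q-Bernoulli polynomial expands in the q-Frobenius–Euler basis as B_{n,q}(x) = (1/(1 − λ)) · ∑_{k=0}^{n} C(n,k)_q · ( B_{n−k,q}(1) − λ · B_{n−k,q} ) · H_{k,q}(x|λ), where B_{n−k,q}(1) is the evaluation of B_{n−k,q}(x) at x = 1. -/

import Mathlib

open Finset Polynomial

/-- The `q`-integer `[n]_q = (1 - q^n)/(1 - q)` viewed in `ℂ`. -/
noncomputable def qInt (q : ℝ) (n : ℕ) : ℂ := (1 - (q : ℂ) ^ n) / (1 - (q : ℂ))

/-- The `q`-factorial `[n]_q! = ∏_{j=1}^n [j]_q`. -/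
noncomputable def qFact (q : ℝ) (n : ℕ) : ℂ := ∏ j ∈ Finset.range n, qInt q (j + 1)

/-- The `q`-binomial coefficient `[n]_q!/([k]_q! [n-k]_q!)`. -/
noncomputable def qBinom (q : ℝ) (n k : ℕ) : ℂ := qFact q n / (qFact q k * qFact q (n - k))

/-- The formal `q`-exponential `e_q(t) = ∑ t^n/[n]_q!` in `ℂ[x][[t]]`. -/
noncomputable def qExp (q : ℝ) : PowerSeries (Polynomial ℂ) :=
  PowerSeries.mk fun n => Polynomial.C (1 / qFact q n)

/-- The formal series `e_q(xt) = ∑ x^n t^n/[n]_q!` in `ℂ[x][[t]]`. -/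
noncomputable def qExpX (q : ℝ) : PowerSeries (Polynomial ℂ) :=
  PowerSeries.mk fun n => Polynomial.C (1 / qFact q n) * Polynomial.X ^ n

/-- `H : ℕ → ℂ[x]` is the family of `q`-Frobenius-Euler polynomials `H_{n,q}(x|λ)`:
`(∑ H_n t^n/[n]_q!) ⬝ (e_q(t) - λ) = (1 - λ) e_q(xt)` in `ℂ[x][[t]]`. -/
def IsqFrobeniusEuler (q : ℝ) (lam : ℂ) (H : ℕ → Polynomial ℂ) : Prop :=
  (PowerSeries.mk fun n => Polynomial.C (1 / qFact q n) * H n) *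
      (qExp q - PowerSeries.C (R := Polynomial ℂ) (Polynomial.C lam)) =
    PowerSeries.C (R := Polynomial ℂ) (Polynomial.C (1 - lam)) * qExpX q

/-- `B : ℕ → ℂ[x]` is the family of `q`-Bernoulli polynomials `B_{n,q}(x)`:
`(∑ B_n t^n/[n]_q!) ⬝ (e_q(t) - 1) = t e_q(xt)` in `ℂ[x][[t]]`. -/
def IsqBernoulli (q : ℝ) (B : ℕ → Polynomial ℂ) : Prop :=
  (PowerSeries.mk fun n => Polynomial.C (1 / qFact q n) * B n) * (qExp q - 1) =
    PowerSeries.X * qExpX q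

/-!
Write `B(t)`, `H(t)` for the `q`-exponential generating functions of the two families and
`E = e_q(t)`. Evaluating the Bernoulli relation at `x = 1` and `x = 0` (where `e_q(xt)` becomes
`E` and `1`) shows that `G(t) = ∑ (B_m(1) - λ B_m(0)) t^m/[m]_q!` satisfies
`G (E - 1) = t (E - λ)`. Hence `(1 - λ) B (E - 1)(E - λ) = (1 - λ) t e_q(xt) (E - λ)
= G (E - 1) H (E - λ)`, and cancelling `(E - 1)(E - λ)` in the domain `ℂ[x][[t]]` gives
`(1 - λ) B = H G`; the theorem is the `t^n` coefficient of this, read through the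
`q`-binomial convolution of `q`-exponential generating functions.
-/

noncomputable def qEgf (q : ℝ) (a : ℕ → ℂ[X]) : PowerSeries ℂ[X] :=
  PowerSeries.mk fun n => C (1 / qFact q n) * a n

lemma qFact_ne_zero {q : ℝ} (hq0 : 0 ≤ q) (hq1 : q < 1) (n : ℕ) : qFact q n ≠ 0 := by
  have hq : (1 : ℂ) - q ≠ 0 := sub_ne_zero.mpr (by exact_mod_cast hq1.ne')
  refine prod_ne_zero_iff.mpr fun j _ => div_ne_zero (sub_ne_zero.mpr ?_) hq
  exact_mod_cast (pow_lt_one₀ hq0 hq1 j.succ_ne_zero).ne'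

@[simp]
lemma qFact_zero (q : ℝ) : qFact q 0 = 1 := prod_range_zero _

section qEgf

variable {q : ℝ}

@[simp]
lemma coeff_qEgf (a : ℕ → ℂ[X]) (n : ℕ) :
    PowerSeries.coeff n (qEgf q a) = C (1 / qFact q n) * a n :=
  PowerSeries.coeff_mk _ _

lemma coeff_qEgf_mul {n : ℕ} (hn : qFact q n ≠ 0) (a b : ℕ → ℂ[X]) :
    PowerSeries.coeff n (qEgf q a * qEgf q b) =
      C (1 / qFact q n) * ∑ k ∈ range (n + 1), C (qBinom q n k) * a k * b (n - k) := by
  rw [PowerSeries.coeff_mul, Nat.sum_antidiagonal_eq_sum_range_succ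
    (fun i j => PowerSeries.coeff i (qEgf q a) * PowerSeries.coeff j (qEgf q b)), mul_sum]
  refine sum_congr rfl fun k _ => ?_
  have hbinom : C (1 / qFact q n) * C (qBinom q n k) =
      C (1 / qFact q k) * C (1 / qFact q (n - k)) := by
    rw [← C_mul, ← C_mul, qBinom]; field_simp
  simp only [coeff_qEgf]
  linear_combination (-(a k * b (n - k))) * hbinom

lemma qEgf_one : qEgf q 1 = qExp q := by
  ext1 n; simp [qEgf, qExp]

lemma qEgf_zero_pow : qEgf q (fun n => 0 ^ n) = 1 := by
  ext1 (_ | n) <;> simp [PowerSeries.coeff_one]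

lemma qEgf_X_pow : qEgf q (fun n => X ^ n) = qExpX q := rfl

lemma map_qEgf (φ : ℂ[X] →+* ℂ[X]) (hφ : ∀ c, φ (C c) = C c) (a : ℕ → ℂ[X]) :
    PowerSeries.map φ (qEgf q a) = qEgf q (φ ∘ a) := by
  ext1 n; simp [PowerSeries.coeff_map, hφ]

lemma map_qExp (φ : ℂ[X] →+* ℂ[X]) (hφ : ∀ c, φ (C c) = C c) :
    PowerSeries.map φ (qExp q) = qExp q := by
  rw [← qEgf_one, map_qEgf φ hφ]; simp

lemma map_qExpX (φ : ℂ[X] →+* ℂ[X]) (hφ : ∀ c, φ (C c) = C c) :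
    PowerSeries.map φ (qExpX q) = qEgf q (fun n => φ X ^ n) := by
  rw [← qEgf_X_pow, map_qEgf φ hφ]; simp [Function.comp_def]

lemma qEgf_sub_C_mul (a b : ℕ → ℂ[X]) (c : ℂ) :
    qEgf q (fun n => a n - C c * b n) = qEgf q a - PowerSeries.C (C c) * qEgf q b := by
  ext1 n; simp only [coeff_qEgf, map_sub, PowerSeries.coeff_C_mul]; ring

end qEgf

section qBernoulli

variable {q : ℝ} {B : ℕ → ℂ[X]}

lemma IsqBernoulli.eval_eq (hB : IsqBernoulli q B) (a : ℂ) :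
    qEgf q (fun m => C ((B m).eval a)) * (qExp q - 1) =
      PowerSeries.X * qEgf q (fun n => C a ^ n) := by
  let φ : ℂ[X] →+* ℂ[X] := C.comp (evalRingHom a)
  have hφ (c : ℂ) : φ (C c) = C c := by simp [φ]
  have hφX : φ X = C a := by simp [φ]
  have hB' : qEgf q B * (qExp q - 1) = PowerSeries.X * qExpX q := hB
  have h := congrArg (PowerSeries.map φ) hB'
  rw [map_mul, map_sub, map_one, map_mul, PowerSeries.map_X, map_qExp φ hφ, map_qExpX φ hφ,
    map_qEgf φ hφ, hφX] at h
  exact h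

lemma IsqBernoulli.eval_one_sub_mul_eval_zero (hB : IsqBernoulli q B) (lam : ℂ) :
    qEgf q (fun m => C ((B m).eval 1 - lam * (B m).eval 0)) * (qExp q - 1) =
      PowerSeries.X * (qExp q - PowerSeries.C (C lam)) := by
  simp only [C_sub, C_mul]
  rw [qEgf_sub_C_mul, sub_mul, mul_assoc, hB.eval_eq 1, hB.eval_eq 0]
  simp only [C_1, one_pow, C_0, ← Pi.one_def, qEgf_one, qEgf_zero_pow]
  ring

end qBernoulli

lemma qExp_sub_one_ne_zero {q : ℝ} (hq : qFact q 1 ≠ 0) : qExp q - 1 ≠ 0 := by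
  intro h
  have := congrArg (PowerSeries.coeff 1) h
  simp [qExp, PowerSeries.coeff_one, hq] at this

lemma qExp_sub_C_ne_zero (q : ℝ) {lam : ℂ} (hlam : lam ≠ 1) :
    qExp q - PowerSeries.C (C lam) ≠ 0 := by
  intro h
  have := congrArg (PowerSeries.coeff 0) h
  simp only [qExp, map_sub, PowerSeries.coeff_mk, PowerSeries.coeff_zero_C, qFact_zero, div_one,
    C_1, map_zero] at this
  rw [← C_1, ← C_sub, C_eq_zero, sub_eq_zero] at this
  exact hlam this.symm

lemma one_sub_mul_qBernoulli_eq {q : ℝ} (hq : qFact q 1 ≠ 0) {lam : ℂ} (hlam : lam ≠ 1)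
    {H B : ℕ → ℂ[X]} (hH : IsqFrobeniusEuler q lam H) (hB : IsqBernoulli q B) :
    PowerSeries.C (C (1 - lam)) * qEgf q B =
      qEgf q H * qEgf q (fun m => C ((B m).eval 1 - lam * (B m).eval 0)) := by
  refine mul_right_cancel₀ (mul_ne_zero (qExp_sub_one_ne_zero hq) (qExp_sub_C_ne_zero q hlam)) ?_
  have hH' : qEgf q H * (qExp q - PowerSeries.C (C lam)) =
      PowerSeries.C (C (1 - lam)) * qExpX q := hH
  have hB' : qEgf q B * (qExp q - 1) = PowerSeries.X * qExpX q := hB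
  calc PowerSeries.C (C (1 - lam)) * qEgf q B * ((qExp q - 1) * (qExp q - PowerSeries.C (C lam)))
      = PowerSeries.C (C (1 - lam)) * (PowerSeries.X * qExpX q) *
          (qExp q - PowerSeries.C (C lam)) := by rw [← hB']; ring
    _ = qEgf q (fun m => C ((B m).eval 1 - lam * (B m).eval 0)) * (qExp q - 1) *
          (qEgf q H * (qExp q - PowerSeries.C (C lam))) := by
        rw [hB.eval_one_sub_mul_eval_zero, hH']; ring
    _ = _ := by ring

/-- `B_{n,q}(x) = (1/(1-λ)) ∑_{k=0}^n C(n,k)_q (B_{n-k,q}(1) - λ B_{n-k,q}) H_{k,q}(x|λ)`. -/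
theorem qBernoulli_expansion_in_qFrobeniusEuler_basis
    (q : ℝ) (hq0 : 0 < q) (hq1 : q < 1) (lam : ℂ) (hlam : lam ≠ 1)
    (H : ℕ → Polynomial ℂ) (hH : IsqFrobeniusEuler q lam H)
    (B : ℕ → Polynomial ℂ) (hB : IsqBernoulli q B) (n : ℕ) :
    B n = Polynomial.C (1 / (1 - lam)) * ∑ k ∈ Finset.range (n + 1),
      Polynomial.C (qBinom q n k *
        ((B (n - k)).eval 1 - lam * (B (n - k)).eval 0)) * H k := by
  have hfact := qFact_ne_zero hq0.le hq1
  have hc := congrArg (PowerSeries.coeff n) (one_sub_mul_qBernoulli_eq (hfact 1) hlam hH hB)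
  rw [PowerSeries.coeff_C_mul, coeff_qEgf, coeff_qEgf_mul (hfact n), mul_left_comm,
    mul_right_inj' (by simpa using hfact n)] at hc
  have hlam' : (1 : ℂ) - lam ≠ 0 := sub_ne_zero.mpr hlam.symm
  calc B n = C (1 / (1 - lam)) * (C (1 - lam) * B n) := by
        rw [← mul_assoc, ← C_mul, one_div_mul_cancel hlam', C_1, one_mul]
    _ = _ := by
        rw [hc]
        congr 1
        exact sum_congr rfl fun k _ => by rw [C_mul]; ring
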